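/- arXiv:2506.01596 — 5 statements merged into one kernel-verified Lean document; each statement's English description precedes it below -/
import Mathlib

section
/- The minimizers of the objective Σ_{t=1}^T tr((X^(t))ᵀ L_t X^(t)) + μ Σ_{t=2}^T ‖X^(t) - X^(t-1)‖_F² subject to XᵀX = I_k (where X is the vertical concatenation of the X^(t)) are exactly the minimizers of tr(Xᵀ L_supra X) subject to XᵀX = I_k; in particular, orthonormal bases of the span of eigenvectors of L_supra corresponding to its k smallest eigenvalues attain the minimum. -/
open Matrix

section Aux

lemma sum_if_val {T : ℕ} (m : ℕ) (g : Fin T → ℝ) :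
    ∑ s : Fin T, (if (s : ℕ) = m then g s else 0) = if h : m < T then g ⟨m, h⟩ else 0 := by
  split_ifs with h
  · rw [Finset.sum_eq_single ⟨m, h⟩]
    · simp
    · intro b _ hb
      rw [if_neg]
      simpa [Fin.ext_iff] using hb
    · simp
  · apply Finset.sum_eq_zero
    intro s _
    rw [if_neg]
    omega

lemma sum_shift {T : ℕ} (g : Fin T → ℝ) :
    ∑ t : Fin T, (if 0 < (t : ℕ) then g t else 0)
      = ∑ t : Fin T, (if h : (t : ℕ) + 1 < T then g ⟨(t : ℕ) + 1, h⟩ else 0) := by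
  have h1 : ∀ t : Fin T, (if h : (t : ℕ) + 1 < T then g ⟨(t : ℕ) + 1, h⟩ else 0)
      = ∑ s : Fin T, (if (s : ℕ) = (t : ℕ) + 1 then g s else 0) := by
    intro t; rw [sum_if_val]
  rw [Finset.sum_congr rfl fun t _ => h1 t, Finset.sum_comm]
  apply Finset.sum_congr rfl
  intro s _
  rcases Nat.eq_zero_or_pos (s : ℕ) with h | h
  · rw [if_neg (by omega)]
    exact (Finset.sum_eq_zero fun t _ => by rw [if_neg (by omega)]).symm
  · rw [if_pos h]
    have hlt : (s : ℕ) - 1 < T := by omega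
    rw [Finset.sum_eq_single ⟨(s:ℕ) - 1, hlt⟩]
    · rw [if_pos (by simp only [Fin.val_mk]; omega)]
    · intro b _ hb
      rw [if_neg]
      intro hc
      exact hb (Fin.ext (by simp only [Fin.val_mk]; omega))
    · simp

lemma card_ind {N k : ℕ} (hk : k ≤ N) :
    ∑ i : Fin N, (if (i : ℕ) < k then (1 : ℝ) else 0) = k := by
  rw [Fin.sum_univ_eq_sum_range (fun m => if m < k then (1:ℝ) else 0)]
  rw [← Finset.sum_filter]
  have : (Finset.range N).filter (· < k) = Finset.range k := by
    ext m; simp; omega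
  rw [this]
  simp

lemma sum_bound {N k : ℕ} (hk : k ≤ N) (ev : Fin N → ℝ) (hmono : Monotone ev)
    (r : Fin N → ℝ) (h0 : ∀ i, 0 ≤ r i) (h1 : ∀ i, r i ≤ 1) (hs : ∑ i, r i = k) :
    ∑ i : Fin N, (if (i : ℕ) < k then ev i else 0) ≤ ∑ i, ev i * r i := by
  rcases Nat.eq_zero_or_pos k with hk0 | hk0
  · subst hk0
    have hz : ∀ i ∈ (Finset.univ : Finset (Fin N)), r i = 0 :=
      (Finset.sum_eq_zero_iff_of_nonneg (fun i _ => h0 i)).mp (by simpa using hs)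
    have : ∑ i, ev i * r i = 0 :=
      Finset.sum_eq_zero fun i hi => by rw [hz i hi, mul_zero]
    simp [this]
  · set c := ev ⟨k - 1, by omega⟩ with hc
    have key : 0 ≤ ∑ i : Fin N, (ev i - c) * (r i - (if (i:ℕ) < k then 1 else 0)) := by
      apply Finset.sum_nonneg
      intro i _
      by_cases hi : (i : ℕ) < k
      · rw [if_pos hi]
        have h1' : ev i ≤ c := hmono (by simp only [Fin.le_def, Fin.val_mk]; omega)
        have := h1 i
        nlinarith
      · rw [if_neg hi]
        have h2' : c ≤ ev i := hmono (by simp only [Fin.le_def, Fin.val_mk]; omega)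
        have := h0 i
        nlinarith
    have expand : ∑ i : Fin N, (ev i - c) * (r i - (if (i:ℕ) < k then 1 else 0))
        = (∑ i, ev i * r i) - (∑ i : Fin N, (if (i:ℕ) < k then ev i else 0))
          - c * (∑ i, r i) + c * (∑ i : Fin N, (if (i:ℕ) < k then (1:ℝ) else 0)) := by
      rw [Finset.mul_sum, Finset.mul_sum, ← Finset.sum_sub_distrib,
        ← Finset.sum_sub_distrib, ← Finset.sum_add_distrib]
      apply Finset.sum_congr rfl
      intro i _
      split_ifs <;> ring
    rw [expand, hs, card_ind hk] at key
    linarith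


lemma trace_quad {m l : Type*} [Fintype m] [Fintype l] (B : Matrix m l ℝ)
    (M : Matrix m m ℝ) (C : Matrix m l ℝ) :
    (Bᵀ * M * C).trace = ∑ v, ∑ w, ∑ j, B v j * M v w * C w j := by
  simp only [Matrix.trace, Matrix.diag, Matrix.mul_apply, Matrix.transpose_apply,
    Finset.sum_mul]
  rw [Finset.sum_congr rfl fun j (_ : j ∈ Finset.univ) =>
    (Finset.sum_comm (f := fun w v => B v j * M v w * C w j)), Finset.sum_comm]
  exact Finset.sum_congr rfl fun v _ => Finset.sum_comm

lemma trace_gram {m l : Type*} [Fintype m] [Fintype l] (C : Matrix m l ℝ) :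
    (Cᵀ * C).trace = ∑ v, ∑ j, C v j * C v j := by
  simp only [Matrix.trace, Matrix.diag, Matrix.mul_apply, Matrix.transpose_apply]
  rw [Finset.sum_comm]

lemma delta_collapse {n : ℕ} {l : Type*} [Fintype l] (c : ℝ) (f g : Fin n → l → ℝ) :
    ∑ v, ∑ w, ∑ j, f v j * (if v = w then c else 0) * g w j
      = c * ∑ v, ∑ j, f v j * g v j := by
  have h : ∀ v w : Fin n, (∑ j, f v j * (if v = w then c else 0) * g w j)
      = if v = w then c * ∑ j, f v j * g w j else 0 := by
    intro v w
    split_ifs with hvw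
    · rw [Finset.mul_sum]; exact Finset.sum_congr rfl fun j _ => by ring
    · simp
  simp only [h]
  rw [Finset.mul_sum]
  apply Finset.sum_congr rfl
  intro v _
  rw [Finset.sum_ite_eq]
  simp

lemma FG_eq (T n k : ℕ) (μ : ℝ) (Lap : Fin T → Matrix (Fin n) (Fin n) ℝ)
    (X : Matrix (Fin T × Fin n) (Fin k) ℝ) :
    (∑ t, ((Matrix.of fun v j => X (t, v) j)ᵀ * Lap t * (Matrix.of fun v j => X (t, v) j)).trace)
      + μ * ∑ t : Fin T,
          (if h : (t : ℕ) + 1 < T then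
            (((Matrix.of fun v j => X (⟨(t : ℕ)+1,h⟩, v) j) - Matrix.of fun v j => X (t, v) j)ᵀ *
             ((Matrix.of fun v j => X (⟨(t : ℕ)+1,h⟩, v) j) - Matrix.of fun v j => X (t, v) j)).trace
           else 0)
    = (Xᵀ * (Matrix.of fun p q : Fin T × Fin n =>
        if p.1 = q.1 then
          Lap p.1 p.2 q.2 + (if p.2 = q.2 then
            ((if (p.1 : ℕ) + 1 < T then (1:ℝ) else 0) + (if 0 < (p.1 : ℕ) then 1 else 0)) * μ else 0)
        else if (p.1 : ℕ) + 1 = (q.1 : ℕ) ∨ (q.1 : ℕ) + 1 = (p.1 : ℕ) then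
          (if p.2 = q.2 then -μ else 0)
        else 0) * X).trace := by
  set cdeg : Fin T → ℝ := fun t =>
    (if (t : ℕ) + 1 < T then (1:ℝ) else 0) + (if 0 < (t : ℕ) then 1 else 0) with hcdeg
  set Qd : Fin T → ℝ := fun t => ∑ v, ∑ w, ∑ j, X (t,v) j * Lap t v w * X (t,w) j with hQd
  set Nq : Fin T → ℝ := fun t => ∑ v, ∑ j, X (t,v) j * X (t,v) j with hNq
  set Ip : Fin T → Fin T → ℝ := fun t s => ∑ v, ∑ j, X (t,v) j * X (s,v) j with hIp
  show _ = (Xᵀ * (Matrix.of fun p q : Fin T × Fin n =>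
        if p.1 = q.1 then
          Lap p.1 p.2 q.2 + (if p.2 = q.2 then cdeg p.1 * μ else 0)
        else if (p.1 : ℕ) + 1 = (q.1 : ℕ) ∨ (q.1 : ℕ) + 1 = (p.1 : ℕ) then
          (if p.2 = q.2 then -μ else 0)
        else 0) * X).trace
  have hE : ∀ t s : Fin T,
      (∑ v, ∑ w, ∑ j, X (t,v) j *
        ((if t = s then
            Lap t v w + (if v = w then cdeg t * μ else 0)
          else if (t : ℕ) + 1 = (s : ℕ) ∨ (s : ℕ) + 1 = (t : ℕ) then
            (if v = w then -μ else 0)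
          else 0)) * X (s,w) j)
      = (if s = t then Qd t + cdeg t * μ * Nq t else 0)
        + (if (s:ℕ) = (t:ℕ)+1 then -μ * Ip t s else 0)
        + (if (t:ℕ) = (s:ℕ)+1 then -μ * Ip t s else 0) := by
    intro t s
    rcases eq_or_ne t s with rfl | hne
    · simp only [if_true]
      have hpt : ∀ (v w : Fin n) (j : Fin k),
          X (t,v) j * (Lap t v w + (if v = w then cdeg t * μ else 0)) * X (t,w) j
          = X (t,v) j * Lap t v w * X (t,w) j
            + X (t,v) j * (if v = w then cdeg t * μ else 0) * X (t,w) j := by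
        intro v w j
        ring
      simp only [hpt, Finset.sum_add_distrib]
      rw [delta_collapse, if_neg (show ¬((t:ℕ) = (t:ℕ)+1) by omega)]
      show Qd t + cdeg t * μ * Nq t = _
      ring
    · rw [if_neg (fun h => hne h.symm)]
      have hLne : ∀ (v w : Fin n) (j : Fin k),
          X (t,v) j * (if t = s then Lap t v w + (if v = w then cdeg t * μ else 0)
            else if (t : ℕ) + 1 = (s : ℕ) ∨ (s : ℕ) + 1 = (t : ℕ) then
              (if v = w then -μ else 0) else 0) * X (s,w) j
          = X (t,v) j * (if (t : ℕ) + 1 = (s : ℕ) ∨ (s : ℕ) + 1 = (t : ℕ) then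
              (if v = w then -μ else 0) else 0) * X (s,w) j := by
        intro v w j
        rw [if_neg hne]
      simp only [hLne]
      by_cases hadj : (t : ℕ) + 1 = (s : ℕ) ∨ (s : ℕ) + 1 = (t : ℕ)
      · simp only [if_pos hadj]
        rw [delta_collapse]
        rcases hadj with h | h
        · rw [if_pos (show (s:ℕ) = (t:ℕ)+1 from h.symm),
            if_neg (show ¬((t:ℕ) = (s:ℕ)+1) by omega)]
          show -μ * Ip t s = _
          ring
        · rw [if_neg (show ¬((s:ℕ) = (t:ℕ)+1) by omega),
            if_pos (show (t:ℕ) = (s:ℕ)+1 from h.symm)]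
          show -μ * Ip t s = _
          ring
      · push_neg at hadj
        simp only [if_neg (not_or.mpr ⟨hadj.1, hadj.2⟩)]
        rw [if_neg (show ¬((s:ℕ) = (t:ℕ)+1) by omega),
          if_neg (show ¬((t:ℕ) = (s:ℕ)+1) by omega)]
        simp
  have hG : (Xᵀ * (Matrix.of fun p q : Fin T × Fin n =>
        if p.1 = q.1 then
          Lap p.1 p.2 q.2 + (if p.2 = q.2 then cdeg p.1 * μ else 0)
        else if (p.1 : ℕ) + 1 = (q.1 : ℕ) ∨ (q.1 : ℕ) + 1 = (p.1 : ℕ) then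
          (if p.2 = q.2 then -μ else 0)
        else 0) * X).trace
      = (∑ t, (Qd t + cdeg t * μ * Nq t))
        + (∑ t : Fin T, (if h : (t:ℕ)+1 < T then -μ * Ip t ⟨(t:ℕ)+1, h⟩ else 0))
        + (∑ s : Fin T, (if h : (s:ℕ)+1 < T then -μ * Ip ⟨(s:ℕ)+1, h⟩ s else 0)) := by
    rw [trace_quad, Fintype.sum_prod_type]
    have step1 : ∀ t : Fin T, ∀ v : Fin n,
        (∑ q : Fin T × Fin n, ∑ j, X (t,v) j *
          (Matrix.of fun p q : Fin T × Fin n =>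
            if p.1 = q.1 then
              Lap p.1 p.2 q.2 + (if p.2 = q.2 then cdeg p.1 * μ else 0)
            else if (p.1 : ℕ) + 1 = (q.1 : ℕ) ∨ (q.1 : ℕ) + 1 = (p.1 : ℕ) then
              (if p.2 = q.2 then -μ else 0)
            else 0) (t,v) q * X q j)
        = ∑ s : Fin T, ∑ w : Fin n, ∑ j, X (t,v) j *
          ((if t = s then
              Lap t v w + (if v = w then cdeg t * μ else 0)
            else if (t : ℕ) + 1 = (s : ℕ) ∨ (s : ℕ) + 1 = (t : ℕ) then
              (if v = w then -μ else 0)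
            else 0)) * X (s,w) j := by
      intro t v
      rw [Fintype.sum_prod_type]
      rfl
    rw [Finset.sum_congr rfl (fun t (_ : t ∈ Finset.univ) =>
      Finset.sum_congr rfl (fun v (_ : v ∈ Finset.univ) => step1 t v))]
    rw [Finset.sum_congr rfl (fun t (_ : t ∈ Finset.univ) =>
      (Finset.sum_comm (f := fun v s => ∑ w, ∑ j, X (t,v) j *
          ((if t = s then
              Lap t v w + (if v = w then cdeg t * μ else 0)
            else if (t : ℕ) + 1 = (s : ℕ) ∨ (s : ℕ) + 1 = (t : ℕ) then
              (if v = w then -μ else 0)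
            else 0)) * X (s,w) j)))]
    rw [Finset.sum_congr rfl (fun t (_ : t ∈ Finset.univ) =>
      Finset.sum_congr rfl (fun s (_ : s ∈ Finset.univ) => hE t s))]
    simp only [Finset.sum_add_distrib]
    congr 1
    congr 1
    · rw [← Finset.sum_add_distrib]
      apply Finset.sum_congr rfl
      intro t _
      rw [Finset.sum_ite_eq' Finset.univ t (fun _ => Qd t + cdeg t * μ * Nq t)]
      simp
    · apply Finset.sum_congr rfl
      intro t _
      exact sum_if_val ((t:ℕ)+1) (fun s => -μ * Ip t s)
    · rw [Finset.sum_comm]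
      apply Finset.sum_congr rfl
      intro s _
      exact sum_if_val ((s:ℕ)+1) (fun t => -μ * Ip t s)
  rw [hG]
  -- the F side
  have h1 : ∀ t : Fin T,
      ((Matrix.of fun v j => X (t, v) j)ᵀ * Lap t * (Matrix.of fun v j => X (t, v) j)).trace
        = Qd t := by
    intro t
    rw [trace_quad]
    rfl
  have h2 : ∀ (t : Fin T) (h : (t:ℕ)+1 < T),
      (((Matrix.of fun v j => X (⟨(t : ℕ)+1,h⟩, v) j) - Matrix.of fun v j => X (t, v) j)ᵀ *
        ((Matrix.of fun v j => X (⟨(t : ℕ)+1,h⟩, v) j) - Matrix.of fun v j => X (t, v) j)).trace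
      = Nq ⟨(t:ℕ)+1,h⟩ + Nq t - Ip ⟨(t:ℕ)+1,h⟩ t - Ip t ⟨(t:ℕ)+1,h⟩ := by
    intro t h
    rw [trace_gram]
    have hpt : ∀ (v : Fin n) (j : Fin k),
        ((Matrix.of fun v j => X (⟨(t : ℕ)+1,h⟩, v) j) - Matrix.of fun v j => X (t, v) j) v j *
        ((Matrix.of fun v j => X (⟨(t : ℕ)+1,h⟩, v) j) - Matrix.of fun v j => X (t, v) j) v j
        = X (⟨(t : ℕ)+1,h⟩, v) j * X (⟨(t : ℕ)+1,h⟩, v) j + X (t,v) j * X (t,v) j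
          - X (⟨(t : ℕ)+1,h⟩, v) j * X (t,v) j - X (t,v) j * X (⟨(t : ℕ)+1,h⟩, v) j := by
      intro v j
      simp only [Matrix.sub_apply, Matrix.of_apply]
      ring
    simp only [hpt, Finset.sum_add_distrib, Finset.sum_sub_distrib]
    rfl
  have h2' : ∀ t : Fin T,
      (if h : (t : ℕ) + 1 < T then
          (((Matrix.of fun v j => X (⟨(t : ℕ)+1,h⟩, v) j) - Matrix.of fun v j => X (t, v) j)ᵀ *
            ((Matrix.of fun v j => X (⟨(t : ℕ)+1,h⟩, v) j) - Matrix.of fun v j => X (t, v) j)).trace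
        else 0)
      = (if h : (t:ℕ)+1 < T then
          Nq ⟨(t:ℕ)+1,h⟩ + Nq t - Ip ⟨(t:ℕ)+1,h⟩ t - Ip t ⟨(t:ℕ)+1,h⟩ else 0) := by
    intro t
    by_cases h : (t:ℕ)+1 < T
    · rw [dif_pos h, dif_pos h, h2 t h]
    · rw [dif_neg h, dif_neg h]
  rw [Finset.sum_congr rfl (fun t (_ : t ∈ Finset.univ) => h1 t)]
  rw [Finset.sum_congr rfl (fun t (_ : t ∈ Finset.univ) => h2' t)]
  -- split the cdeg sum
  have hcd : ∀ t : Fin T, Qd t + cdeg t * μ * Nq t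
      = Qd t + ((if 0 < (t:ℕ) then μ * Nq t else 0) + (if (t:ℕ)+1 < T then μ * Nq t else 0)) := by
    intro t
    rw [hcdeg]
    simp only []
    split_ifs <;> ring
  rw [Finset.sum_congr rfl (fun t (_ : t ∈ Finset.univ) => hcd t)]
  simp only [Finset.sum_add_distrib]
  rw [sum_shift (fun t => μ * Nq t)]
  rw [Finset.mul_sum]
  rw [← Finset.sum_add_distrib, ← Finset.sum_add_distrib, ← Finset.sum_add_distrib,
    ← Finset.sum_add_distrib, ← Finset.sum_add_distrib]
  apply Finset.sum_congr rfl
  intro t _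
  simp only [hQd, hNq, hIp]
  by_cases h : (t:ℕ)+1 < T
  · simp only [dif_pos h, if_pos h]
    ring
  · simp only [dif_neg h, if_neg h]
    ring

lemma delta_collapse' {m : Type*} [Fintype m] [DecidableEq m] {l : Type*} [Fintype l]
    (c : m → ℝ) (f g : m → l → ℝ) :
    ∑ v, ∑ w, ∑ j, f v j * (if v = w then c v else 0) * g w j
      = ∑ v, c v * ∑ j, f v j * g v j := by
  have h : ∀ v w : m, (∑ j, f v j * (if v = w then c v else 0) * g w j)
      = if v = w then c v * ∑ j, f v j * g w j else 0 := by
    intro v w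
    split_ifs with hvw
    · rw [Finset.mul_sum]; exact Finset.sum_congr rfl fun j _ => by ring
    · simp
  simp only [h]
  apply Finset.sum_congr rfl
  intro v _
  rw [Finset.sum_ite_eq]
  simp

lemma min_part (T n k : ℕ) (hk : k ≤ T * n)
    (L : Matrix (Fin T × Fin n) (Fin T × Fin n) ℝ)
    (ev : Fin (T * n) → ℝ) (u : Fin (T * n) → (Fin T × Fin n → ℝ))
    (hmono : Monotone ev)
    (horth : ∀ i j, ∑ p, u i p * u j p = (if i = j then (1 : ℝ) else 0))
    (heig : ∀ i, L.mulVec (u i) = ev i • u i)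
    (X : Matrix (Fin T × Fin n) (Fin k) ℝ)
    (hX : Xᵀ * X = 1)
    (hspan : ∀ j : Fin k, (fun p => X p j) ∈
      Submodule.span ℝ {x | ∃ i : Fin (T * n), i.val < k ∧ x = u i}) :
    IsMinOn (fun Y : Matrix (Fin T × Fin n) (Fin k) ℝ => (Yᵀ * L * Y).trace)
      {Y | Yᵀ * Y = 1} X := by
  set U : Matrix (Fin (T * n)) (Fin T × Fin n) ℝ := Matrix.of fun i p => u i p with hU
  have hUUT : U * Uᵀ = 1 := by
    ext i j
    rw [Matrix.mul_apply, Matrix.one_apply]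
    simpa [hU] using horth i j
  have hUTU : Uᵀ * U = 1 :=
    (Matrix.mul_eq_one_comm_of_equiv (finProdFinEquiv (m := T) (n := n)).symm).mp hUUT
  have hLU : L = Uᵀ * Matrix.diagonal ev * U := by
    have h1 : L * Uᵀ = Uᵀ * Matrix.diagonal ev := by
      ext p i
      rw [Matrix.mul_apply, Matrix.mul_apply]
      have hv : ∑ q, L p q * Uᵀ q i = (L.mulVec (u i)) p := by
        rw [Matrix.mulVec]
        simp [dotProduct, hU]
      rw [hv, heig i]
      simp [Matrix.diagonal, hU, Finset.sum_ite_eq, mul_comm]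
    calc L = L * (Uᵀ * U) := by rw [hUTU, mul_one]
      _ = (L * Uᵀ) * U := by rw [Matrix.mul_assoc]
      _ = Uᵀ * Matrix.diagonal ev * U := by rw [h1]
  -- main computation for any Y with orthonormal columns
  have main : ∀ Y : Matrix (Fin T × Fin n) (Fin k) ℝ, Yᵀ * Y = 1 →
      ((Yᵀ * L * Y).trace = ∑ i, ev i * (∑ j, (U * Y) i j * (U * Y) i j))
      ∧ (∀ i, 0 ≤ ∑ j, (U * Y) i j * (U * Y) i j)
      ∧ (∀ i, (∑ j, (U * Y) i j * (U * Y) i j) ≤ 1)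
      ∧ (∑ i, ∑ j, (U * Y) i j * (U * Y) i j) = k := by
    intro Y hY
    set B : Matrix (Fin (T * n)) (Fin k) ℝ := U * Y with hB
    have hBtB : Bᵀ * B = 1 := by
      rw [hB, Matrix.transpose_mul]
      calc Yᵀ * Uᵀ * (U * Y) = Yᵀ * (Uᵀ * U) * Y := by
            simp only [Matrix.mul_assoc]
        _ = 1 := by rw [hUTU, Matrix.mul_one, hY]
    refine ⟨?_, ?_, ?_, ?_⟩
    · rw [hLU]
      have : Yᵀ * (Uᵀ * Matrix.diagonal ev * U) * Y = Bᵀ * Matrix.diagonal ev * B := by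
        rw [hB, Matrix.transpose_mul]
        simp only [Matrix.mul_assoc]
      rw [this, trace_quad]
      have hd : ∀ (v w : Fin (T * n)) (j : Fin k),
          B v j * Matrix.diagonal ev v w * B w j
          = B v j * (if v = w then ev v else 0) * B w j := by
        intro v w j
        rw [Matrix.diagonal_apply]
      simp only [hd]
      exact delta_collapse' ev B B
    · intro i
      exact Finset.sum_nonneg fun j _ => mul_self_nonneg _
    · intro i
      set M : Matrix (Fin (T * n)) (Fin (T * n)) ℝ := B * Bᵀ with hM
      have hMM : M * M = M := by
        rw [hM]
        calc B * Bᵀ * (B * Bᵀ) = B * (Bᵀ * B) * Bᵀ := by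
              simp only [Matrix.mul_assoc]
          _ = B * Bᵀ := by rw [hBtB, Matrix.mul_one]
      have hMii : M i i = ∑ j, B i j * B i j := by
        rw [hM, Matrix.mul_apply]
        simp [Matrix.transpose_apply]
      have hMsym : ∀ l, M l i = M i l := by
        intro l
        rw [hM, Matrix.mul_apply, Matrix.mul_apply]
        exact Finset.sum_congr rfl fun j _ => by
          rw [Matrix.transpose_apply, Matrix.transpose_apply, mul_comm]
      have h1 : M i i = ∑ l, M i l * M i l := by
        conv_lhs => rw [← hMM]
        rw [Matrix.mul_apply]
        exact Finset.sum_congr rfl fun l _ => by rw [hMsym l]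
      have h2 : M i i * M i i ≤ ∑ l, M i l * M i l :=
        Finset.single_le_sum (f := fun l => M i l * M i l)
          (fun l _ => mul_self_nonneg _) (Finset.mem_univ i)
      have h3 : 0 ≤ M i i := by
        rw [hMii]; exact Finset.sum_nonneg fun j _ => mul_self_nonneg _
      rw [← hMii]
      nlinarith [h1, h2, h3]
    · have htr := congrArg Matrix.trace hBtB
      rw [Matrix.trace_one] at htr
      simp only [Matrix.trace, Matrix.diag, Matrix.mul_apply, Matrix.transpose_apply] at htr
      rw [Finset.sum_comm] at htr
      simpa using htr
  -- value at X : columns in the span of first k eigenvectors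
  have hzero : ∀ i : Fin (T * n), k ≤ (i : ℕ) → ∀ j, (U * X) i j = 0 := by
    intro i hi j
    have hcol := hspan j
    have key : ∀ (x : Fin T × Fin n → ℝ)
        (_ : x ∈ Submodule.span ℝ {x | ∃ i' : Fin (T * n), i'.val < k ∧ x = u i'}),
        ∑ p, u i p * x p = 0 := by
      intro x hx
      induction hx using Submodule.span_induction with
      | mem x hx =>
        obtain ⟨i', hi', rfl⟩ := hx
        rw [horth i i', if_neg (by intro h; subst h; omega)]
      | zero => simp
      | add x y hx hy ihx ihy =>
        simp only [Pi.add_apply, mul_add, Finset.sum_add_distrib, ihx, ihy, add_zero]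
      | smul a x hx ih =>
        simp only [Pi.smul_apply, smul_eq_mul]
        rw [Finset.sum_congr rfl fun p _ => (by ring :
          u i p * (a * x p) = a * (u i p * x p)), ← Finset.mul_sum, ih, mul_zero]
    have := key _ hcol
    rw [Matrix.mul_apply]
    simpa [hU] using this
  obtain ⟨hval, hpos, hle, hsum⟩ := main X hX
  have hr0 : ∀ i : Fin (T * n), k ≤ (i : ℕ) → (∑ j, (U * X) i j * (U * X) i j) = 0 := by
    intro i hi
    rw [Finset.sum_congr rfl fun j _ => by rw [hzero i hi j, mul_zero]]
    simp
  have hr1 : ∀ i : Fin (T * n), (i : ℕ) < k → (∑ j, (U * X) i j * (U * X) i j) = 1 := by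
    intro i hik
    have hd0 : ∑ i : Fin (T * n),
        ((if (i : ℕ) < k then (1:ℝ) else 0) - ∑ j, (U * X) i j * (U * X) i j) = 0 := by
      rw [Finset.sum_sub_distrib, card_ind hk, hsum]
      ring
    have hdpos : ∀ i : Fin (T * n),
        0 ≤ (if (i : ℕ) < k then (1:ℝ) else 0) - ∑ j, (U * X) i j * (U * X) i j := by
      intro i'
      by_cases h : (i' : ℕ) < k
      · rw [if_pos h]; have := hle i'; linarith
      · rw [if_neg h, hr0 i' (by omega)]
        norm_num
    have := (Finset.sum_eq_zero_iff_of_nonneg (fun i' _ => hdpos i')).mp hd0 i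
      (Finset.mem_univ i)
    rw [if_pos hik] at this
    linarith
  have hXval : (Xᵀ * L * X).trace = ∑ i : Fin (T * n), (if (i : ℕ) < k then ev i else 0) := by
    rw [hval]
    apply Finset.sum_congr rfl
    intro i _
    by_cases h : (i : ℕ) < k
    · rw [if_pos h, hr1 i h, mul_one]
    · rw [if_neg h, hr0 i (by omega), mul_zero]
  rw [isMinOn_iff]
  intro Y hY
  obtain ⟨hvalY, hposY, hleY, hsumY⟩ := main Y hY
  simp only [Set.mem_setOf_eq] at hY
  rw [hXval, hvalY]
  exact sum_bound hk ev hmono _ hposY hleY hsumY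

end Aux

/-- The minimizers of the smoothness objective over matrices with orthonormal
columns coincide with the minimizers of the supra-Laplacian trace objective;
in particular, matrices with orthonormal columns spanning the span of eigenvectors of
the `k` smallest eigenvalues of the supra-Laplacian attain the minimum. -/
theorem supra_smoothness_minimizers
    (T n k : ℕ) (μ : ℝ) (hμ : 0 < μ) (hk : k ≤ T * n)
    (A : Fin T → Matrix (Fin n) (Fin n) ℝ)
    (hsymm : ∀ t, (A t).IsSymm) :
    let Lap : Fin T → Matrix (Fin n) (Fin n) ℝ :=
      fun t => Matrix.diagonal (fun v => ∑ w, A t v w) - A t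
    let cdeg : Fin T → ℝ := fun t =>
      (if t.val + 1 < T then 1 else 0) + (if 0 < t.val then 1 else 0)
    let Lsupra : Matrix (Fin T × Fin n) (Fin T × Fin n) ℝ :=
      Matrix.of fun p q =>
        if p.1 = q.1 then
          Lap p.1 p.2 q.2 + (if p.2 = q.2 then cdeg p.1 * μ else 0)
        else if p.1.val + 1 = q.1.val ∨ q.1.val + 1 = p.1.val then
          (if p.2 = q.2 then -μ else 0)
        else 0
    let blk : Matrix (Fin T × Fin n) (Fin k) ℝ → Fin T → Matrix (Fin n) (Fin k) ℝ :=
      fun X t => Matrix.of fun v j => X (t, v) j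
    let F : Matrix (Fin T × Fin n) (Fin k) ℝ → ℝ := fun X =>
      (∑ t, ((blk X t)ᵀ * Lap t * blk X t).trace)
        + μ * ∑ t : Fin T,
            (if h : t.val + 1 < T then
              ((blk X ⟨t.val + 1, h⟩ - blk X t)ᵀ * (blk X ⟨t.val + 1, h⟩ - blk X t)).trace
             else 0)
    let G : Matrix (Fin T × Fin n) (Fin k) ℝ → ℝ := fun X => (Xᵀ * Lsupra * X).trace
    let S : Set (Matrix (Fin T × Fin n) (Fin k) ℝ) := {X | Xᵀ * X = 1}
    -- the two constrained minimization problems have exactly the same minimizers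
    (∀ X, (X ∈ S ∧ IsMinOn F S X) ↔ (X ∈ S ∧ IsMinOn G S X))
    -- eigenvectors of the `k` smallest eigenvalues attain the minimum
    ∧ (∀ (ev : Fin (T * n) → ℝ) (u : Fin (T * n) → (Fin T × Fin n → ℝ)),
        Monotone ev →
        (∀ i j, ∑ p, u i p * u j p = (if i = j then (1 : ℝ) else 0)) →
        (∀ i, Lsupra.mulVec (u i) = ev i • u i) →
        ∀ X : Matrix (Fin T × Fin n) (Fin k) ℝ,
          X ∈ S →
          (∀ j : Fin k, (fun p => X p j) ∈
            Submodule.span ℝ {x | ∃ i : Fin (T * n), i.val < k ∧ x = u i}) →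
          IsMinOn G S X ∧ IsMinOn F S X) := by
  intro Lap cdeg Lsupra blk F G S
  have hFG : ∀ X, F X = G X := fun X => FG_eq T n k μ Lap X
  have hFGfun : F = G := funext hFG
  constructor
  · intro X
    rw [hFGfun]
  · intro ev u hmono horth heig X hXS hXspan
    have hmin : IsMinOn G S X :=
      min_part T n k hk Lsupra ev u hmono horth heig X hXS hXspan
    exact ⟨hmin, by rw [hFGfun]; exact hmin⟩
end

section
/- For a symmetric positive semidefinite matrix L ∈ ℝ^{N×N}, the minimum of tr(Xᵀ L X) over X ∈ ℝ^{N×k} with XᵀX = I_k equals the sum of the k smallest eigenvalues of L (counted with multiplicity). -/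
open Matrix

lemma sum_ite_lt_eq (k N : ℕ) (hk : k ≤ N) (f : ℕ → ℝ) :
    ∑ m ∈ Finset.range N, (if m < k then f m else 0) = ∑ m ∈ Finset.range k, f m := by
  rw [← Finset.sum_filter]
  congr 1
  ext m
  simp only [Finset.mem_filter, Finset.mem_range]
  omega

lemma key_ineq (N k : ℕ) (hk : k ≤ N) (ev c : Fin N → ℝ)
    (hmono : Monotone ev) (hev : ∀ i, 0 ≤ ev i)
    (hc0 : ∀ i, 0 ≤ c i) (hc1 : ∀ i, c i ≤ 1) (hsum : ∑ i, c i = k) :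
    ∑ j : Fin k, ev (Fin.castLE hk j) ≤ ∑ i, ev i * c i := by
  rcases Nat.eq_zero_or_pos k with h0 | hpos
  · subst h0
    simp only [Finset.univ_eq_empty, Finset.sum_empty]
    exact Finset.sum_nonneg fun i _ => mul_nonneg (hev i) (hc0 i)
  · have hkN : k - 1 < N := by omega
    set τ : ℝ := ev ⟨k - 1, hkN⟩ with hτ
    set d : Fin N → ℝ := fun i => if (i : ℕ) < k then 1 else 0 with hd
    set F : ℕ → ℝ := fun m => if h : m < N then ev ⟨m, h⟩ else 0 with hF
    have hFval : ∀ i : Fin N, ev i = F (i : ℕ) := by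
      intro i; simp [hF, i.isLt]
    have hLHS : ∑ j : Fin k, ev (Fin.castLE hk j) = ∑ i, ev i * d i := by
      have h1 : ∑ j : Fin k, ev (Fin.castLE hk j) = ∑ m ∈ Finset.range k, F m := by
        rw [← Fin.sum_univ_eq_sum_range F k]
        exact Finset.sum_congr rfl fun j _ => by rw [hFval]; rfl
      have h2 : ∑ i, ev i * d i = ∑ m ∈ Finset.range N, (if m < k then F m else 0) := by
        rw [← Fin.sum_univ_eq_sum_range (fun m => if m < k then F m else 0) N]
        refine Finset.sum_congr rfl fun i _ => ?_
        simp only [hd, mul_ite, mul_one, mul_zero]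
        split <;> simp [hFval i]
      rw [h1, h2, sum_ite_lt_eq k N hk]
    have hdsum : ∑ i, d i = (k : ℝ) := by
      have : ∑ i : Fin N, d i = ∑ m ∈ Finset.range N, (if m < k then (1:ℝ) else 0) :=
        Fin.sum_univ_eq_sum_range (fun m => if m < k then (1:ℝ) else 0) N
      rw [this, sum_ite_lt_eq k N hk]
      simp
    have key : ∀ i : Fin N, τ * (c i - d i) ≤ ev i * c i - ev i * d i := by
      intro i
      by_cases h : (i : ℕ) < k
      · have h1 : ev i ≤ τ := hmono (by rw [Fin.le_def]; simp; omega)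
        simp only [hd, if_pos h]
        nlinarith [hc1 i]
      · have h1 : τ ≤ ev i := hmono (by rw [Fin.le_def]; simp; omega)
        simp only [hd, if_neg h]
        nlinarith [hc0 i]
    have hsum2 : ∑ i, τ * (c i - d i) ≤ ∑ i, (ev i * c i - ev i * d i) :=
      Finset.sum_le_sum fun i _ => key i
    rw [← Finset.mul_sum, Finset.sum_sub_distrib, hsum, hdsum, sub_self, mul_zero,
      Finset.sum_sub_distrib] at hsum2
    rw [hLHS]
    linarith

/-- For a symmetric positive semidefinite matrix `L`, the minimum of `tr(Xᵀ L X)`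
over matrices `X` with orthonormal columns (`Xᵀ X = I_k`) equals the sum of the
`k` smallest eigenvalues of `L`, counted with multiplicity. The eigenvalues are
given by a nondecreasing enumeration `ev` together with an orthonormal family of
corresponding eigenvectors `u`. -/
theorem trace_min_eq_sum_smallest_eigenvalues
    (N k : ℕ) (hk : k ≤ N)
    (L : Matrix (Fin N) (Fin N) ℝ) (hL : L.PosSemidef)
    (ev : Fin N → ℝ) (hmono : Monotone ev)
    (u : Fin N → (Fin N → ℝ))
    (horth : ∀ i j, ∑ p, u i p * u j p = (if i = j then (1 : ℝ) else 0))
    (heig : ∀ i, L.mulVec (u i) = ev i • u i) :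
    IsLeast {y : ℝ | ∃ X : Matrix (Fin N) (Fin k) ℝ, Xᵀ * X = 1 ∧ y = (Xᵀ * L * X).trace}
      (∑ j : Fin k, ev (Fin.castLE hk j)) := by
  have hev : ∀ i, 0 ≤ ev i := by
    intro i
    have h := hL.dotProduct_mulVec_nonneg (u i)
    rw [heig i] at h
    have hu : u i ⬝ᵥ (ev i • u i) = ev i * 1 := by
      rw [dotProduct_smul]
      simp only [smul_eq_mul]
      congr 1
      simpa [dotProduct] using horth i i
    simp only [star_trivial] at h
    rw [hu, mul_one] at h
    exact h
  constructor
  · -- membership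
    refine ⟨Matrix.of (fun p j => u (Fin.castLE hk j) p), ?_, ?_⟩
    · ext i j
      simp only [Matrix.mul_apply, Matrix.transpose_apply, Matrix.of_apply, Matrix.one_apply]
      rw [horth]
      simp [Fin.castLE_inj]
    · set X : Matrix (Fin N) (Fin k) ℝ := Matrix.of (fun p j => u (Fin.castLE hk j) p) with hXdef
      have hLX : ∀ (p : Fin N) (j : Fin k),
          (L * X) p j = ev (Fin.castLE hk j) * u (Fin.castLE hk j) p := by
        intro p j
        have h := congrFun (heig (Fin.castLE hk j)) p
        simp only [Matrix.mulVec, dotProduct, Pi.smul_apply, smul_eq_mul] at h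
        simpa [Matrix.mul_apply, hXdef] using h
      rw [Matrix.mul_assoc, Matrix.trace]
      refine (Finset.sum_congr rfl fun j _ => ?_)
      simp only [Matrix.diag_apply, Matrix.mul_apply, Matrix.transpose_apply, hLX]
      have : ∑ p, X p j * (ev (Fin.castLE hk j) * u (Fin.castLE hk j) p)
          = ev (Fin.castLE hk j) * ∑ p, u (Fin.castLE hk j) p * u (Fin.castLE hk j) p := by
        rw [Finset.mul_sum]; refine Finset.sum_congr rfl fun p _ => by simp [hXdef]; ring
      rw [this, horth]
      simp
  · -- lower bound
    rintro y ⟨X, hX, rfl⟩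
    set U : Matrix (Fin N) (Fin N) ℝ := Matrix.of u with hU
    have hUUt : U * Uᵀ = 1 := by
      ext i j
      simp only [Matrix.mul_apply, Matrix.transpose_apply, Matrix.one_apply, hU, Matrix.of_apply]
      exact horth i j
    have hUtU : Uᵀ * U = 1 := mul_eq_one_comm.mp hUUt
    have hLUt : L * Uᵀ = Uᵀ * Matrix.diagonal ev := by
      ext p i
      have h := congrFun (heig i) p
      simp only [Matrix.mulVec, dotProduct, Pi.smul_apply, smul_eq_mul] at h
      rw [Matrix.mul_diagonal]
      simp only [Matrix.mul_apply, Matrix.transpose_apply, hU, Matrix.of_apply]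
      rw [h]; ring
    have hL' : L = Uᵀ * Matrix.diagonal ev * U := by
      calc L = L * (Uᵀ * U) := by rw [hUtU, Matrix.mul_one]
      _ = (L * Uᵀ) * U := by rw [Matrix.mul_assoc]
      _ = Uᵀ * Matrix.diagonal ev * U := by rw [hLUt]
    set Y : Matrix (Fin N) (Fin k) ℝ := U * X with hY
    have hYtY : Yᵀ * Y = 1 := by
      calc Yᵀ * Y = Xᵀ * (Uᵀ * (U * X)) := by rw [hY, Matrix.transpose_mul, Matrix.mul_assoc]
      _ = Xᵀ * ((Uᵀ * U) * X) := by rw [Matrix.mul_assoc]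
      _ = Xᵀ * X := by rw [hUtU, Matrix.one_mul]
      _ = 1 := hX
    have hP : (Y * Yᵀ) * (Y * Yᵀ) = Y * Yᵀ := by
      calc (Y * Yᵀ) * (Y * Yᵀ) = Y * ((Yᵀ * Y) * Yᵀ) := by
            simp only [Matrix.mul_assoc]
      _ = Y * Yᵀ := by rw [hYtY, Matrix.one_mul]
    have hPsymm : ∀ i j, (Y * Yᵀ) j i = (Y * Yᵀ) i j := by
      intro i j
      simp only [Matrix.mul_apply, Matrix.transpose_apply]
      exact Finset.sum_congr rfl fun p _ => mul_comm _ _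
    set c : Fin N → ℝ := fun i => (Y * Yᵀ) i i with hc
    have hc0 : ∀ i, 0 ≤ c i := by
      intro i
      simp only [hc, Matrix.mul_apply, Matrix.transpose_apply]
      exact Finset.sum_nonneg fun j _ => mul_self_nonneg _
    have hc1 : ∀ i, c i ≤ 1 := by
      intro i
      have hPi := congrFun (congrFun hP i) i
      rw [Matrix.mul_apply] at hPi
      have hsq : ∑ p, (Y * Yᵀ) i p * (Y * Yᵀ) p i = ∑ p, ((Y * Yᵀ) i p)^2 :=
        Finset.sum_congr rfl fun p _ => by rw [hPsymm i p]; ring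
      have h1 : ∑ p, ((Y * Yᵀ) i p)^2 = c i := by rw [← hsq, hPi]
      have h2 : (c i)^2 ≤ ∑ p, ((Y * Yᵀ) i p)^2 := by
        have := Finset.single_le_sum (f := fun p => ((Y * Yᵀ) i p)^2)
          (fun p _ => sq_nonneg _) (Finset.mem_univ i)
        exact this
      nlinarith [hc0 i, h1, h2]
    have hsum : ∑ i, c i = (k : ℝ) := by
      have h1 : ∑ i, c i = (Y * Yᵀ).trace := rfl
      rw [h1, Matrix.trace_mul_comm, hYtY, Matrix.trace_one]
      simp
    have htr : (Xᵀ * L * X).trace = ∑ i, ev i * c i := by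
      have h1 : Xᵀ * L * X = Yᵀ * Matrix.diagonal ev * Y := by
        rw [hL', hY, Matrix.transpose_mul]
        simp only [Matrix.mul_assoc]
      rw [h1, Matrix.mul_assoc,
        Matrix.trace_mul_comm Yᵀ (Matrix.diagonal ev * Y), Matrix.mul_assoc]
      -- goal: trace (diagonal ev * (Y * Yᵀ)) = ∑ i, ev i * c i
      rw [Matrix.trace]
      refine Finset.sum_congr rfl fun i _ => ?_
      simp only [Matrix.diag_apply, Matrix.diagonal_mul, hc]
    rw [htr]
    exact key_ineq N k hk ev c hmono hev hc0 hc1 hsum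
end

section
/- If the color refinement of Supra-WL assigns the same color to node-time pairs (v,t) and (w,t) at every iteration l, then Layer-WL also assigns them the same color at every iteration l. Consequently, the partition of node-time pairs induced by Supra-WL colors refines the partition induced by Layer-WL colors. -/
/-- If Supra-WL assigns the same color to node-time pairs `(v,t)` and `(w,t)` at every
iteration, then Layer-WL also assigns them the same color at every iteration.
Consequently (per-iteration version), the partition induced by Supra-WL colors refines
the one induced by Layer-WL colors. -/
theorem supraWL_refines_layerWL
    (V C E : Type) (T : ℕ)
    (adj : Fin T → V → Multiset (V × E))
    (HASHs : C → C → C → Multiset (C × E × Fin T) → C)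
    (HASHl : C → Multiset (C × E × Fin T) → C)
    (hInjS : Function.Injective
      (fun q : C × C × C × Multiset (C × E × Fin T) => HASHs q.1 q.2.1 q.2.2.1 q.2.2.2))
    (hInjL : Function.Injective (fun q : C × Multiset (C × E × Fin T) => HASHl q.1 q.2))
    (c0 cpad : C)
    (Cs Cl : ℕ → V → Fin T → C)
    (hCs0 : ∀ v t, Cs 0 v t = c0)
    (hCl0 : ∀ v t, Cl 0 v t = c0)
    (hCsStep : ∀ l v (t : Fin T), Cs (l + 1) v t =
      HASHs (Cs l v t)
        (if 0 < t.val then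
          Cs l v ⟨t.val - 1, lt_of_le_of_lt (Nat.sub_le _ _) t.isLt⟩ else cpad)
        (if h : t.val + 1 < T then Cs l v ⟨t.val + 1, h⟩ else cpad)
        ((adj t v).map (fun p => (Cs l p.1 t, p.2, t))))
    (hClStep : ∀ l v (t : Fin T), Cl (l + 1) v t =
      HASHl (Cl l v t) ((adj t v).map (fun p => (Cl l p.1 t, p.2, t)))) :
    (∀ v w t, (∀ l, Cs l v t = Cs l w t) → ∀ l, Cl l v t = Cl l w t)
    ∧ (∀ l v w t, Cs l v t = Cs l w t → Cl l v t = Cl l w t) := by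

  classical
  have key : ∀ l, ∀ v w (t : Fin T), Cs l v t = Cs l w t → Cl l v t = Cl l w t := by
    intro l
    induction l with
    | zero => intro v w t _; rw [hCl0, hCl0]
    | succ l ih =>
      intro v w t h
      rw [hCsStep, hCsStep] at h
      have h4 := hInjS (show (fun q : C × C × C × Multiset (C × E × Fin T) => HASHs q.1 q.2.1 q.2.2.1 q.2.2.2) (_,_,_,_) = (fun q : C × C × C × Multiset (C × E × Fin T) => HASHs q.1 q.2.1 q.2.2.1 q.2.2.2) (_,_,_,_) from h)
      simp only [Prod.mk.injEq] at h4
      obtain ⟨h1, -, -, hm⟩ := h4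
      rw [hClStep, hClStep]
      set g : C × E × Fin T → C × E × Fin T := fun q =>
        if h : ∃ u, Cs l u q.2.2 = q.1 then (Cl l (Classical.choose h) q.2.2, q.2.1, q.2.2)
        else q with hgdef
      have hg : ∀ (x : V) (s : Fin T) (e : E), g (Cs l x s, e, s) = (Cl l x s, e, s) := by
        intro x s e
        have hex : ∃ u, Cs l u s = Cs l x s := ⟨x, rfl⟩
        simp only [hgdef]
        rw [dif_pos hex]
        have hc := Classical.choose_spec hex
        rw [ih _ _ _ hc]
      have e1 : ∀ y : V, (adj t y).map (fun p => (Cl l p.1 t, p.2, t)) =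
          ((adj t y).map (fun p => (Cs l p.1 t, p.2, t))).map g := by
        intro y
        rw [Multiset.map_map]
        apply Multiset.map_congr rfl
        intro p _
        exact (hg p.1 t p.2).symm
      rw [ih _ _ _ h1, e1, e1]
      exact congrArg (fun m => HASHl (Cl l w t) (Multiset.map g m)) hm
  exact ⟨fun v w t h l => key l v w t (h l), fun l v w t h => key l v w t h⟩
end

section
/- Supra-WL is strictly more powerful than Layer-WL: there exists a pair of non-isomorphic discrete-time temporal graphs that Supra-WL distinguishes (the stable multisets of Supra-WL colors differ) but Layer-WL does not (the multisets of Layer-WL colors agree at every iteration), while any pair distinguished by Layer-WL is also distinguished by Supra-WL. -/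
/-- Canonical Layer-WL colors at iteration `l`: a color is the previous color together
with the multiset of the previous colors of the within-snapshot neighbors. -/
def LC : ℕ → Type
  | 0 => Unit
  | l + 1 => LC l × Multiset (LC l)

/-- Canonical Supra-WL colors at iteration `l`: a color is the previous color, the
previous colors of the same node at times `t-1` and `t+1` (padding `none` at the
boundary), and the multiset of previous colors of within-snapshot neighbors. -/
def SC : ℕ → Type
  | 0 => Unit
  | l + 1 => SC l × Option (SC l) × Option (SC l) × Multiset (SC l)

/-- Layer-WL color refinement, run independently on each snapshot. -/
def layerColor {n T : ℕ} (adj : Fin T → Fin n → Fin n → Bool) :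
    (l : ℕ) → Fin n → Fin T → LC l
  | 0, _, _ => ()
  | l + 1, v, t =>
    (layerColor adj l v t,
      (Finset.univ.filter (fun u => adj t v u)).val.map (fun u => layerColor adj l u t))

/-- Supra-WL color refinement on the supra-graph, additionally using the colors of the
same node at the previous and next time steps. -/
def supraColor {n T : ℕ} (adj : Fin T → Fin n → Fin n → Bool) :
    (l : ℕ) → Fin n → Fin T → SC l
  | 0, _, _ => ()
  | l + 1, v, t =>
    (supraColor adj l v t,
      (if 0 < t.val then
        some (supraColor adj l v ⟨t.val - 1, lt_of_le_of_lt (Nat.sub_le _ _) t.isLt⟩)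
       else none),
      (if h : t.val + 1 < T then some (supraColor adj l v ⟨t.val + 1, h⟩) else none),
      (Finset.univ.filter (fun u => adj t v u)).val.map (fun u => supraColor adj l u t))

/-- Overall multiset of Layer-WL colors (tagged with their layer). -/
def layerMultiset {n T : ℕ} (adj : Fin T → Fin n → Fin n → Bool) (l : ℕ) :
    Multiset (Fin T × LC l) :=
  (Finset.univ : Finset (Fin n × Fin T)).val.map (fun p => (p.2, layerColor adj l p.1 p.2))

/-- Overall multiset of Supra-WL colors (tagged with their layer). -/
def supraMultiset {n T : ℕ} (adj : Fin T → Fin n → Fin n → Bool) (l : ℕ) :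
    Multiset (Fin T × SC l) :=
  (Finset.univ : Finset (Fin n × Fin T)).val.map (fun p => (p.2, supraColor adj l p.1 p.2))

/-- Isomorphism of discrete-time temporal graphs: a bijection of nodes that is
simultaneously an isomorphism of every snapshot. -/
def TGIso {n T : ℕ} (adj₁ adj₂ : Fin T → Fin n → Fin n → Bool) : Prop :=
  ∃ π : Fin n ≃ Fin n, ∀ t u v, adj₁ t u v = adj₂ t (π u) (π v)


/-- Forget the temporal components of a Supra-WL color. -/
def SCforget : (l : ℕ) → SC l → LC l
  | 0, _ => ()
  | l + 1, c => (SCforget l c.1, c.2.2.2.map (SCforget l))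

lemma forget_supra {n T : ℕ} (adj : Fin T → Fin n → Fin n → Bool) :
    ∀ (l : ℕ) (v : Fin n) (t : Fin T),
      SCforget l (supraColor adj l v t) = layerColor adj l v t := by
  intro l
  induction l with
  | zero => intro v t; rfl
  | succ l ih =>
    intro v t
    simp only [supraColor, layerColor, SCforget, Multiset.map_map]
    exact Prod.ext (ih v t) (by simp [Function.comp, ih])

lemma layer_of_supra {n T : ℕ} (adj₁ adj₂ : Fin T → Fin n → Fin n → Bool) (l : ℕ)
    (h : supraMultiset adj₁ l = supraMultiset adj₂ l) :
    layerMultiset adj₁ l = layerMultiset adj₂ l := by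
  have := congrArg (Multiset.map (fun p : Fin T × SC l => (p.1, SCforget l p.2))) h
  simpa only [supraMultiset, layerMultiset, Multiset.map_map, Function.comp,
    forget_supra] using this

lemma layerColor_iso {n T : ℕ} (adj₁ adj₂ : Fin T → Fin n → Fin n → Bool)
    (σ : Fin T → Fin n ≃ Fin n)
    (h : ∀ t u v, adj₁ t u v = adj₂ t (σ t u) (σ t v)) :
    ∀ (l : ℕ) (v : Fin n) (t : Fin T),
      layerColor adj₁ l v t = layerColor adj₂ l (σ t v) t := by
  intro l
  induction l with
  | zero => intro v t; rfl
  | succ l ih =>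
    intro v t
    simp only [layerColor]
    refine Prod.ext (ih v t) ?_
    have hf : (Finset.univ.filter (fun u => adj₂ t (σ t v) u)) =
        (Finset.univ.filter (fun u => adj₁ t v u)).map (σ t).toEmbedding := by
      ext u
      simp only [Finset.mem_filter, Finset.mem_univ, true_and, Finset.mem_map,
        Equiv.coe_toEmbedding]
      constructor
      · intro hu
        refine ⟨(σ t).symm u, ?_, by simp⟩
        rw [h t v ((σ t).symm u)]
        simpa using hu
      · rintro ⟨w, hw, rfl⟩
        rw [← h t v w]; exact hw
    rw [hf]
    simp only [Finset.map_val, Multiset.map_map, Function.comp]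
    exact Multiset.map_congr rfl (fun u _ => ih u t)

lemma layerMultiset_iso {n T : ℕ} (adj₁ adj₂ : Fin T → Fin n → Fin n → Bool)
    (σ : Fin T → Fin n ≃ Fin n)
    (h : ∀ t u v, adj₁ t u v = adj₂ t (σ t u) (σ t v)) (l : ℕ) :
    layerMultiset adj₁ l = layerMultiset adj₂ l := by
  let E : Fin n × Fin T ≃ Fin n × Fin T :=
    { toFun := fun p => (σ p.2 p.1, p.2)
      invFun := fun p => ((σ p.2).symm p.1, p.2)
      left_inv := fun p => by simp
      right_inv := fun p => by simp }
  calc layerMultiset adj₁ l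
      = (Finset.univ : Finset (Fin n × Fin T)).val.map
          (fun p => (p.2, layerColor adj₂ l (σ p.2 p.1) p.2)) := by
        simp only [layerMultiset]
        exact Multiset.map_congr rfl (fun p _ => by rw [layerColor_iso adj₁ adj₂ σ h])
    _ = ((Finset.univ : Finset (Fin n × Fin T)).val.map E).map
          (fun p => (p.2, layerColor adj₂ l p.1 p.2)) := by
        simp only [Multiset.map_map, Function.comp]; rfl
    _ = layerMultiset adj₂ l := by
        have : (Finset.univ : Finset (Fin n × Fin T)).val.map E =
            (Finset.univ : Finset (Fin n × Fin T)).val := by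
          have := Finset.map_univ_equiv E
          calc (Finset.univ : Finset (Fin n × Fin T)).val.map E
              = ((Finset.univ : Finset (Fin n × Fin T)).map E.toEmbedding).val := rfl
            _ = _ := by rw [this]
        rw [this]; rfl

instance SCdecEq : (l : ℕ) → DecidableEq (SC l)
  | 0 => inferInstanceAs (DecidableEq Unit)
  | l + 1 =>
    letI := SCdecEq l
    inferInstanceAs (DecidableEq (SC l × Option (SC l) × Option (SC l) × Multiset (SC l)))

def adjA : Fin 2 → Fin 4 → Fin 4 → Bool := fun _ u v =>
  (u = 0 && v = 1) || (u = 1 && v = 0)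

def adjB : Fin 2 → Fin 4 → Fin 4 → Bool := fun t u v =>
  if t = 0 then (u = 0 && v = 1) || (u = 1 && v = 0)
  else (u = 2 && v = 3) || (u = 3 && v = 2)

def sigmaAB : Fin 2 → Fin 4 ≃ Fin 4 := fun t =>
  if t = 0 then Equiv.refl (Fin 4) else Equiv.addLeft (2 : Fin 4)


/-- Supra-WL is strictly more powerful than Layer-WL: there is a pair of non-isomorphic
temporal graphs that Supra-WL distinguishes but Layer-WL does not, while every pair
distinguished by Layer-WL is also distinguished by Supra-WL. -/
theorem supraWL_strictly_more_powerful :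
    (∃ (n T : ℕ) (adj₁ adj₂ : Fin T → Fin n → Fin n → Bool),
      (∀ t u v, adj₁ t u v = adj₁ t v u) ∧ (∀ t u, adj₁ t u u = false) ∧
      (∀ t u v, adj₂ t u v = adj₂ t v u) ∧ (∀ t u, adj₂ t u u = false) ∧
      ¬ TGIso adj₁ adj₂ ∧
      (∀ l, layerMultiset adj₁ l = layerMultiset adj₂ l) ∧
      (∃ l, supraMultiset adj₁ l ≠ supraMultiset adj₂ l))
    ∧ (∀ (n T : ℕ) (adj₁ adj₂ : Fin T → Fin n → Fin n → Bool) (l : ℕ),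
        layerMultiset adj₁ l ≠ layerMultiset adj₂ l →
        ∃ m, supraMultiset adj₁ m ≠ supraMultiset adj₂ m) := by
  constructor
  · refine ⟨4, 2, adjA, adjB, by decide, by decide, by decide, by decide,
      by unfold TGIso; decide,
      fun l => layerMultiset_iso adjA adjB sigmaAB (by decide) l,
      ⟨2, by unfold supraMultiset; decide⟩⟩
  · intro n T adj₁ adj₂ l h
    exact ⟨l, fun hs => h (layer_of_supra adj₁ adj₂ l hs)⟩
end

section
/- If two node-time pairs receive different colors under Layer-WL at some iteration, then they receive different colors under Supra-WL at the same iteration. -/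
/-- If two node-time pairs receive different colors under Layer-WL at some iteration,
then they receive different colors under Supra-WL at the same iteration. -/
theorem layerWL_distinguishes_implies_supraWL_distinguishes
    (V C E : Type) (T : ℕ)
    (adj : Fin T → V → Multiset (V × E))
    (HASHs : C → C → C → Multiset (C × E × Fin T) → C)
    (HASHl : C → Multiset (C × E × Fin T) → C)
    (hInjS : Function.Injective
      (fun q : C × C × C × Multiset (C × E × Fin T) => HASHs q.1 q.2.1 q.2.2.1 q.2.2.2))
    (hInjL : Function.Injective (fun q : C × Multiset (C × E × Fin T) => HASHl q.1 q.2))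
    (c0 cpad : C)
    (Cs Cl : ℕ → V → Fin T → C)
    (hCs0 : ∀ v t, Cs 0 v t = c0)
    (hCl0 : ∀ v t, Cl 0 v t = c0)
    (hCsStep : ∀ l v (t : Fin T), Cs (l + 1) v t =
      HASHs (Cs l v t)
        (if 0 < t.val then
          Cs l v ⟨t.val - 1, lt_of_le_of_lt (Nat.sub_le _ _) t.isLt⟩ else cpad)
        (if h : t.val + 1 < T then Cs l v ⟨t.val + 1, h⟩ else cpad)
        ((adj t v).map (fun p => (Cs l p.1 t, p.2, t))))
    (hClStep : ∀ l v (t : Fin T), Cl (l + 1) v t =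
      HASHl (Cl l v t) ((adj t v).map (fun p => (Cl l p.1 t, p.2, t)))) :
    ∀ l v w t, Cl l v t ≠ Cl l w t → Cs l v t ≠ Cs l w t := by
  have key : ∀ l, ∀ v w (t : Fin T), Cs l v t = Cs l w t → Cl l v t = Cl l w t := by
    intro l
    induction l with
    | zero => intro v w t _; rw [hCl0, hCl0]
    | succ l ih =>
      intro v w t h
      rw [hCsStep, hCsStep] at h
      have h4 := hInjS (show (fun q : C × C × C × Multiset (C × E × Fin T) => HASHs q.1 q.2.1 q.2.2.1 q.2.2.2) (_,_,_,_) = (fun q : C × C × C × Multiset (C × E × Fin T) => HASHs q.1 q.2.1 q.2.2.1 q.2.2.2) (_,_,_,_) from h)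
      have h1 : Cs l v t = Cs l w t := congrArg Prod.fst h4
      have hm : (adj t v).map (fun p => (Cs l p.1 t, p.2, t))
          = (adj t w).map (fun p => (Cs l p.1 t, p.2, t)) :=
        congrArg (fun q => q.2.2.2) h4
      -- transport the multiset equality to Cl colors
      classical
      let ψ : C × E × Fin T → C × E × Fin T := fun x =>
        if h : ∃ u, x.1 = Cs l u x.2.2 then (Cl l h.choose x.2.2, x.2.1, x.2.2) else x
      have hψ : ∀ (p : V × E), ψ (Cs l p.1 t, p.2, t) = (Cl l p.1 t, p.2, t) := by
        intro p
        have hex : ∃ u, (Cs l p.1 t, p.2, t).1 = Cs l u (Cs l p.1 t, p.2, t).2.2 := ⟨p.1, rfl⟩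
        simp only [ψ, dif_pos hex]
        have := hex.choose_spec
        exact congrArg (fun c => (c, p.2, t)) (ih hex.choose p.1 t this.symm).symm ▸ rfl
      have hml : (adj t v).map (fun p => (Cl l p.1 t, p.2, t))
          = (adj t w).map (fun p => (Cl l p.1 t, p.2, t)) := by
        have e1 : ∀ (u : V), ((adj t u).map (fun p => (Cl l p.1 t, p.2, t)))
            = ((adj t u).map (fun p => (Cs l p.1 t, p.2, t))).map ψ := by
          intro u
          rw [Multiset.map_map]
          exact Multiset.map_congr rfl (fun p _ => (hψ p).symm)
        rw [e1, e1, hm]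
      rw [hClStep, hClStep, ih v w t h1, hml]
  intro l v w t hne hs
  exact hne (key l v w t hs)
end
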